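/- Let Δ be a pure shifted simplicial complex of dimension a−1 on [n], and let Ψ(Δ) = {ψ(F) : F a facet of Δ} (with ψ taken with parameters r = n−a). Then the h-vector of Δ equals the f-vector of Ψ(Δ); that is, for every i, h_i(Δ) equals the number of facets F of Δ with deg ψ(F) = i. -/

import Mathlib

open Finset

noncomputable section

/-- The largest `a` with `C(a,ℓ) ≤ p` (searched within a sufficient bound). -/
def largestBinom (ℓ p : ℕ) : ℕ :=
  Nat.findGreatest (fun a => Nat.choose a ℓ ≤ p) (p + ℓ)

/-- The Macaulay lower shadow `∂^ℓ(p)`, computed from the `ℓ`-representation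
`p = C(a_ℓ,ℓ) + ⋯ + C(a_e,e)` via the greedy algorithm; `∂^ℓ(0) = 0`. -/
def mshadow : ℕ → ℕ → ℕ
  | 0, _ => 0
  | (ℓ+1), p =>
    if p = 0 then 0
    else Nat.choose (largestBinom (ℓ+1) p - 1) ℓ +
      mshadow ℓ (p - Nat.choose (largestBinom (ℓ+1) p) (ℓ+1))

/-- `(f 0, f 1, …, f d)` is an M-sequence (of nonnegative integers):
`f 0 = 1` and `∂^ℓ(f ℓ) ≤ f (ℓ-1)` for `1 ≤ ℓ ≤ d`. -/
def IsMSeqI (f : ℕ → ℤ) (d : ℕ) : Prop :=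
  f 0 = 1 ∧ (∀ ℓ ≤ d, 0 ≤ f ℓ) ∧
    ∀ ℓ, 1 ≤ ℓ → ℓ ≤ d → (mshadow ℓ (f ℓ).toNat : ℤ) ≤ f (ℓ - 1)

/-- A simplicial complex on `[n]`: a family of subsets closed under taking subsets. -/
def IsCplx {n : ℕ} (Δ : Set (Finset (Fin n))) : Prop :=
  ∀ F ∈ Δ, ∀ G, G ⊆ F → G ∈ Δ

/-- A shifted family on `[n]`: replacing a smaller element by a larger one stays in the family. -/
def ShiftedCplx {n : ℕ} (Δ : Set (Finset (Fin n))) : Prop :=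
  ∀ F ∈ Δ, ∀ r s : Fin n, r < s → r ∈ F → s ∉ F → insert s (F.erase r) ∈ Δ

/-- `F` is a facet (inclusion-maximal member) of `Δ`. -/
def IsFacet {n : ℕ} (Δ : Set (Finset (Fin n))) (F : Finset (Fin n)) : Prop :=
  F ∈ Δ ∧ ∀ G ∈ Δ, F ⊆ G → F = G

/-- `fvec Δ i` is the number of faces of cardinality `i` (that is, `f_{i-1}`). -/
def fvec {n : ℕ} (Δ : Set (Finset (Fin n))) (i : ℕ) : ℕ :=
  {F ∈ Δ | F.card = i}.ncard

/-- The `h`-vector of a `(d-1)`-complex, defined by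
`Σ h_j y^j = Σ f_{i-1} (1-y)^{d-i} y^i`, i.e. `h_j = Σ_{i≤j} (-1)^{j-i} C(d-i, j-i) f_{i-1}`. -/
def hvec {n : ℕ} (d : ℕ) (Δ : Set (Finset (Fin n))) (j : ℕ) : ℤ :=
  ∑ i ∈ Finset.range (j + 1),
    (-1 : ℤ) ^ (j - i) * (Nat.choose (d - i) (j - i) : ℤ) * (fvec Δ i : ℤ)

/-- The pure skeleton of `Δ` whose facets are the faces of cardinality `c`
(the pure `(c-1)`-skeleton `Δ^[c-1]`). -/
def pureSkel {n : ℕ} (Δ : Set (Finset (Fin n))) (c : ℕ) : Set (Finset (Fin n)) :=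
  {G | ∃ F ∈ Δ, F.card = c ∧ G ⊆ F}

/-- The `h̃`-triangle: `h̃_{i,j} = h_j(Δ^[i-1])`. -/
def htilde {n : ℕ} (Δ : Set (Finset (Fin n))) (i j : ℕ) : ℤ :=
  hvec i (pureSkel Δ i) j

/-- The `h`-triangle: `h_{i,j} = h̃_{i,j} - Σ_{ℓ≤j} h̃_{i+1,ℓ}`. -/
def htri {n : ℕ} (Δ : Set (Finset (Fin n))) (i j : ℕ) : ℤ :=
  htilde Δ i j - ∑ ℓ ∈ Finset.range (j + 1), htilde Δ (i + 1) ℓ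

/-- `σ(F)`: the longest terminal segment `{s, s+1, …, n}` contained in `F`
(empty if the last vertex is not in `F`). -/
def sigmaSeg {n : ℕ} (F : Finset (Fin n)) : Finset (Fin n) :=
  Finset.univ.filter (fun k => ∀ l, k ≤ l → l ∈ F)

/-- The degree of a monomial, given by its exponent vector. -/
def degM {k : ℕ} (m : Fin k → ℕ) : ℕ := ∑ i, m i

/-- The monomial `m` only involves the first `r` variables `w_1, …, w_r`. -/
def SupportedOn {k : ℕ} (r : ℕ) (m : Fin k → ℕ) : Prop :=
  ∀ i : Fin k, r ≤ (i : ℕ) → m i = 0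

/-- A multicomplex: a set of monomials closed under divisibility. -/
def IsMulticx {k : ℕ} (M : Set (Fin k → ℕ)) : Prop :=
  ∀ m ∈ M, ∀ m' : Fin k → ℕ, (∀ i, m' i ≤ m i) → m' ∈ M

/-- The monomial `w_j ⬝ (m / w_i)`. -/
def shiftMove {k : ℕ} (m : Fin k → ℕ) (i j : Fin k) : Fin k → ℕ :=
  fun t => if t = i then m i - 1 else if t = j then m j + 1 else m t

/-- A shifted multicomplex (on the first `r` variables). -/
def ShiftedMC {k : ℕ} (r : ℕ) (M : Set (Fin k → ℕ)) : Prop :=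
  ∀ m ∈ M, ∀ i j : Fin k, i < j → (j : ℕ) < r → 0 < m i → shiftMove m i j ∈ M

/-- Viewing `F` as the set of north-step positions of a lattice path, `xcoordS F p` is the
x-coordinate of the step at position `p`, i.e. the number of east steps strictly before `p`. -/
def xcoordS {k : ℕ} (F : Finset (Fin k)) (p : Fin k) : ℕ :=
  (Finset.univ.filter (fun j => j < p ∧ j ∉ F)).card

/-- `ψ = λ ∘ ν⁻¹` : the monomial on `W_r` associated to an `a`-subset `F` of `[r+a]`;
the exponent of `w_{i+1}` is the number of north steps with x-coordinate `i`. -/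
def psiM (r : ℕ) {k : ℕ} (F : Finset (Fin k)) : Fin k → ℕ :=
  fun i => if (i : ℕ) < r then (F.filter (fun p => xcoordS F p = (i : ℕ))).card else 0

/-- The partial sum `m_1 + ⋯ + m_i` of exponents strictly before position `i`. -/
def psum {k : ℕ} (m : Fin k → ℕ) (i : Fin k) : ℕ :=
  ∑ j ∈ Finset.univ.filter (fun j => j < i), m j

/-- `φ = ν ∘ λ⁻¹` : the set of north-step positions of the lattice path associated to a
monomial `m` on the first `r` variables (the remaining north steps lie in the last column). -/
def phiM (r : ℕ) {k : ℕ} (m : Fin k → ℕ) : Finset (Fin k) :=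
  Finset.univ.filter (fun p =>
    (∃ i : Fin k, (i : ℕ) < r ∧ psum m i + (i : ℕ) ≤ (p : ℕ) ∧
        (p : ℕ) < psum m i + m i + (i : ℕ)) ∨
    degM m + r ≤ (p : ℕ))

/-- The `a`-cone of `M` in the variable with (0-indexed) index `t`:
`{ w_{t+1}^ℓ · m : m ∈ M, deg m + ℓ < a }`. -/
def coneMC {k : ℕ} (t a : ℕ) (M : Set (Fin k → ℕ)) : Set (Fin k → ℕ) :=
  {p | ∃ m ∈ M, ∃ ℓ : ℕ, degM m + ℓ < a ∧
    p = fun i : Fin k => if (i : ℕ) = t then m i + ℓ else m i}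

/-- `Φ(M)`: the simplicial complex whose facets are the sets `φ(m)`, `m ∈ M`. -/
def PhiCplx (r : ℕ) {k : ℕ} (M : Set (Fin k → ℕ)) : Set (Finset (Fin k)) :=
  {G | ∃ m ∈ M, G ⊆ phiM r m}

/-- A `d`-metacomplex on `n`: a sequence of multicomplexes `M^[i]` on `{w_1,…,w_{n-i}}`
of degree `≤ i` with `C^i M^[i] ⊆ M^[i-1]`. -/
def IsMeta (n d : ℕ) (M : ℕ → Set (Fin n → ℕ)) : Prop :=
  (∀ i ≤ d, IsMulticx (M i) ∧ ∀ m ∈ M i, SupportedOn (n - i) m ∧ degM m ≤ i) ∧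
  (∀ i, 1 ≤ i → i ≤ d → coneMC (n - i) i (M i) ⊆ M (i - 1))

/-- A metacomplex is shifted if all its multicomplexes are. -/
def ShiftedMeta (n d : ℕ) (M : ℕ → Set (Fin n → ℕ)) : Prop :=
  ∀ i ≤ d, ShiftedMC (n - i) (M i)

/-- The `f`-triangle of a metacomplex: `f_{i,j}` = number of degree-`j` monomials in `M^[i]`. -/
def ftri (n : ℕ) (M : ℕ → Set (Fin n → ℕ)) (i j : ℕ) : ℕ :=
  {m ∈ M i | degM m = j}.ncard

/-- `Φ̄(𝓜) = ⋃_{i≤d} {φ^i(m) : m ∈ M^[i]}`. -/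
def PhiBar (n d : ℕ) (M : ℕ → Set (Fin n → ℕ)) : Set (Finset (Fin n)) :=
  {F | ∃ i ≤ d, ∃ m ∈ M i, F = phiM (n - i) m}

/-- `Ψ̄(Δ)`: the metacomplex with `M^[i] = {ψ(F) : F ∈ Δ, |F| = i}`. -/
def PsiBar (n : ℕ) (Δ : Set (Finset (Fin n))) : ℕ → Set (Fin n → ℕ) :=
  fun i => {p | ∃ F ∈ Δ, F.card = i ∧ p = psiM (n - i) F}

/-- The (finite) set of all monomials of degree `≤ t` in the variables `u_1, …, u_s`. -/
def monos (s t : ℕ) : Finset (Fin s → ℕ) :=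
  ((Finset.univ : Finset (Fin s → Fin (t + 1))).image
      (fun f => fun i => ((f i : ℕ)))).filter (fun m => degM m ≤ t)

/-- An `M_{s,t}`-array: a positive-integer valued function on monomials of degree `≤ t`
in `u_1,…,u_s` satisfying conditions (1)–(3) of Definition 4.1. -/
def IsMArray (s t : ℕ) (q : (Fin s → ℕ) → ℕ) : Prop :=
  (∀ m, degM m ≤ t → 0 < q m) ∧
  (∀ m, degM m ≤ t → ∀ i j : Fin s, i < j → 0 < m i → q m ≤ q (shiftMove m i j)) ∧
  (∀ m, degM m = t → q m = 1) ∧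
  (∀ m, degM m < t → ∀ j : Fin s,
    mshadow (t - degM m) (q m) ≤ q (fun x => if x = j then m x + 1 else m x))

/-- An `M_{s,t}(h)`-composition of `r`: an `M_{s,t}`-array with `q^m ≥ h_{t - deg m}`
and `Σ_m q^m = r`. -/
def IsComposition (s t : ℕ) (h : ℕ → ℤ) (r : ℤ) (q : (Fin s → ℕ) → ℕ) : Prop :=
  IsMArray s t q ∧ (∀ m, degM m ≤ t → h (t - degM m) ≤ (q m : ℤ)) ∧
  (∑ m ∈ monos s t, (q m : ℤ)) = r

/-- `Σ_s 𝒟`: the sum of the `q^m` over monomials divisible by the last variable `u_s`. -/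
def SigmaLast (s t : ℕ) (q : (Fin s → ℕ) → ℕ) : ℕ :=
  ∑ m ∈ (monos s t).filter (fun m => ∃ i : Fin s, (i : ℕ) = s - 1 ∧ 0 < m i), q m

/-- `ρ_{s,t}(r;h) = min { Σ_s 𝒟 : 𝒟 an M_{s,t}(h)-composition of r }`. -/
def rho (s t : ℕ) (h : ℕ → ℤ) (r : ℤ) : ℕ :=
  sInf {v : ℕ | ∃ q, IsComposition s t h r q ∧ SigmaLast s t q = v}

/-- A minimal non-face of `Δ`. -/
def IsMinNonface {n : ℕ} (Δ : Set (Finset (Fin n))) (G : Finset (Fin n)) : Prop :=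
  G ∉ Δ ∧ ∀ G' ⊂ G, G' ∈ Δ

/-- The Alexander dual `Δ* = {F : [n]∖F ∉ Δ}`. -/
def dualCplx {n : ℕ} (Δ : Set (Finset (Fin n))) : Set (Finset (Fin n)) :=
  {F | Fᶜ ∉ Δ}

/-- `m_{ℓ,k}(Δ)`: the number of minimal non-faces `G` of `Δ` with `|G| = k` and
`max G = ℓ + k - 1` (vertices labelled `1, …, n`). -/
def mGen {n : ℕ} (Δ : Set (Finset (Fin n))) (ℓ k : ℕ) : ℕ :=
  {G : Finset (Fin n) | IsMinNonface Δ G ∧ G.card = k ∧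
    (∃ v ∈ G, (v : ℕ) + 1 = ℓ + k - 1) ∧ ∀ u ∈ G, (u : ℕ) + 1 ≤ ℓ + k - 1}.ncard

/-- `μ_{ℓ,k}(Δ)` (written `muGen Δ k ℓ`), defined by the recursion
`m_{ℓ,k} = μ_{ℓ,k} − Σ_{q=1}^{ℓ} μ_{q,k−1}`. -/
def muGen {n : ℕ} (Δ : Set (Finset (Fin n))) : ℕ → ℕ → ℤ
  | 0, ℓ => (mGen Δ ℓ 0 : ℤ)
  | (k+1), ℓ => (mGen Δ ℓ (k+1) : ℤ) + ∑ q ∈ Finset.Icc 1 ℓ, muGen Δ k q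

/-- A lattice path from `(0,0)` to `(n-a, a)`, as a word in `{N, E}` of length `n`
with exactly `a` letters `N` (`true` = north). -/
def NPath (n a : ℕ) : Type :=
  {L : Fin n → Bool // (Finset.univ.filter (fun i => L i = true)).card = a}

/-- `ν(L)`: the set of positions of the north steps of `L`. -/
def nuP {n a : ℕ} (L : NPath n a) : Finset (Fin n) :=
  Finset.univ.filter (fun i => L.1 i = true)

/-- The height of the path after step `p` (number of north steps at positions `≤ p`). -/
def heightAt {n a : ℕ} (L : NPath n a) (p : Fin n) : ℕ :=
  (Finset.univ.filter (fun i => i ≤ p ∧ L.1 i = true)).card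

/-- `L ≤ L'` iff `L` never goes above `L'`. -/
def PathLe {n a : ℕ} (L L' : NPath n a) : Prop :=
  ∀ p : Fin n, heightAt L p ≤ heightAt L' p

/-- An order ideal of the poset `𝓛_{r,a}` of lattice paths. -/
def IsOrderIdealP {n a : ℕ} (Q : Set (NPath n a)) : Prop :=
  ∀ L ∈ Q, ∀ L', PathLe L' L → L' ∈ Q

/-- The x-coordinate of the step of `L` at position `p`. -/
def xcoordP {n a : ℕ} (L : NPath n a) (p : Fin n) : ℕ :=
  (Finset.univ.filter (fun j => j < p ∧ L.1 j = false)).card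

/-- `λ(L)`: the monomial `∏ w_i^{λ_i(L)}`, where `λ_i(L)` is the number of north steps
of `L` with x-coordinate `i - 1`. -/
def lamP (r : ℕ) {n a : ℕ} (L : NPath n a) : Fin n → ℕ :=
  fun i => if (i : ℕ) < r then
    (Finset.univ.filter (fun p => L.1 p = true ∧ xcoordP L p = (i : ℕ))).card
  else 0

/-!
A pure shifted complex is partitioned by its facets: every face `G` lies in exactly one
interval `[F \ σ(F), F]` with `F` a facet. For existence take, among the facets containing `G`,
one with the largest vertex sum; a vertex of `F \ σ(F)` outside `G` could be shifted to a larger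
non-vertex, increasing the sum. Each interval contributes `y^|R| (y + (1 - y))^(a - |R|) = y^|R|`
(with `R = F \ σ(F)`) to `Σ_G y^|G| (1 - y)^(a - |G|) = Σ_j h_j y^j`, so `h_j` counts the facets
with `|F \ σ(F)| = j`. Finally `deg ψ(F) = |F \ σ(F)|`: the north steps not recorded by `ψ` are
those with x-coordinate `r`, i.e. the positions of the terminal segment `σ(F)`.
-/

open Polynomial

lemma coeff_one_sub_X_pow {R : Type*} [CommRing R] (m k : ℕ) :
    ((1 - X : R[X]) ^ m).coeff k = (-1) ^ k * m.choose k := by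
  have hterm : ∀ i ∈ range (m + 1), (-X : R[X]) ^ i * 1 ^ (m - i) * (m.choose i : R[X])
      = C ((-1) ^ i * (m.choose i : R)) * X ^ i := by
    intro i _
    rw [neg_pow, one_pow, mul_one, C_mul, C_pow, C_neg, C_1, map_natCast]
    ring
  rw [sub_eq_neg_add, add_pow, sum_congr rfl hterm, finsetSum_coeff]
  simp_rw [coeff_C_mul_X_pow]
  rw [sum_ite_eq]
  split_ifs with h
  · rfl
  · rw [Nat.choose_eq_zero_of_lt (by simpa using h), Nat.cast_zero, mul_zero]

section HPolynomial

variable {n : ℕ}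

def hPoly (d : ℕ) (Δ : Set (Finset (Fin n))) : ℤ[X] :=
  ∑ G ∈ Δ.toFinite.toFinset, X ^ #G * (1 - X) ^ (d - #G)

lemma fvec_eq_card_filter (Δ : Set (Finset (Fin n))) (i : ℕ) :
    fvec Δ i = #{G ∈ Δ.toFinite.toFinset | #G = i} := by
  rw [fvec, Set.ncard_eq_toFinset_card _ (Δ.toFinite.subset (Set.sep_subset _ _))]
  congr 1
  ext G
  simp

lemma hvec_eq_coeff_hPoly (d : ℕ) (Δ : Set (Finset (Fin n))) (j : ℕ) :
    hvec d Δ j = (hPoly d Δ).coeff j := by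
  set g : ℕ → ℤ := fun i => (-1) ^ (j - i) * (d - i).choose (j - i)
  have hcoeff : ∀ G : Finset (Fin n), (X ^ #G * (1 - X : ℤ[X]) ^ (d - #G)).coeff j
      = if #G ≤ j then g #G else 0 := by
    intro G
    rw [mul_comm, coeff_mul_X_pow', coeff_one_sub_X_pow]
  have hmaps : ∀ G ∈ Δ.toFinite.toFinset.filter (#· ≤ j), #G ∈ range (j + 1) :=
    fun G hG => mem_range.mpr (Nat.lt_succ_of_le (mem_filter.mp hG).2)
  rw [hPoly, finsetSum_coeff]
  simp_rw [hcoeff]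
  rw [← sum_filter, ← sum_fiberwise_of_maps_to hmaps, hvec]
  refine sum_congr rfl fun i hi => ?_
  rw [filter_filter, sum_congr rfl fun G hG => by rw [(mem_filter.mp hG).2.2], sum_const,
    fvec_eq_card_filter, nsmul_eq_mul, mul_comm]
  congr 3
  ext G
  simp only [mem_filter, mem_range] at hi ⊢
  exact and_congr_right fun _ => by omega

end HPolynomial

lemma Finset.sum_Icc_pow_mul_pow {α R : Type*} [DecidableEq α] [CommSemiring R] (x y : R)
    {s t : Finset α} (hst : s ⊆ t) :
    ∑ u ∈ Icc s t, x ^ #u * y ^ (#t - #u) = x ^ #s * (x + y) ^ (#t - #s) := by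
  have hinj : Set.InjOn (s ∪ ·) ((t \ s).powerset : Set (Finset α)) := by
    intro u hu v hv huv
    simp only [coe_powerset, Set.mem_preimage, Set.mem_powerset_iff, coe_subset] at hu hv
    rw [← union_sdiff_cancel_left (disjoint_sdiff.mono_right hu),
      ← union_sdiff_cancel_left (disjoint_sdiff.mono_right hv), show s ∪ u = s ∪ v from huv]
  rw [Icc_eq_image_powerset hst, sum_image hinj, ← card_sdiff_of_subset hst,
    ← sum_pow_mul_eq_add_pow, mul_sum]
  refine sum_congr rfl fun u hu => ?_
  have hu : u ⊆ t \ s := mem_powerset.mp hu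
  have hcard : #(s ∪ u) = #s + #u := card_union_of_disjoint (disjoint_sdiff.mono_right hu)
  have hts : #t - (#s + #u) = #(t \ s) - #u := by
    rw [card_sdiff_of_subset hst]; omega
  rw [hcard, hts, pow_add, mul_assoc]

lemma hPoly_eq_sum_X_pow_of_partition {n d : ℕ} {Δ : Set (Finset (Fin n))}
    (S : Finset (Finset (Fin n))) (R : Finset (Fin n) → Finset (Fin n))
    (hcard : ∀ F ∈ S, #F = d) (hR : ∀ F ∈ S, R F ⊆ F)
    (hcover : ∀ G, G ∈ Δ ↔ ∃ F ∈ S, R F ⊆ G ∧ G ⊆ F)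
    (hdisj : (S : Set (Finset (Fin n))).PairwiseDisjoint fun F => Icc (R F) F) :
    hPoly d Δ = ∑ F ∈ S, X ^ #(R F) := by
  have hfaces : Δ.toFinite.toFinset = S.biUnion fun F => Icc (R F) F := by
    ext G
    simp [hcover]
  rw [hPoly, hfaces, sum_biUnion hdisj]
  refine sum_congr rfl fun F hF => ?_
  rw [← hcard F hF, sum_Icc_pow_mul_pow _ _ (hR F hF), add_sub_cancel, one_pow, mul_one]

section Shifted

variable {n : ℕ}

@[simp]
lemma mem_sigmaSeg {F : Finset (Fin n)} {k : Fin n} : k ∈ sigmaSeg F ↔ ∀ l, k ≤ l → l ∈ F := by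
  simp [sigmaSeg]

lemma eq_of_sdiff_sigmaSeg_subset {F₁ F₂ G : Finset (Fin n)} (hcard : #F₁ = #F₂)
    (hR₁ : F₁ \ sigmaSeg F₁ ⊆ G) (hG₁ : G ⊆ F₁) (hR₂ : F₂ \ sigmaSeg F₂ ⊆ G) (hG₂ : G ⊆ F₂) :
    F₁ = F₂ := by
  by_contra hne
  obtain ⟨x, hx₁, hx₂⟩ := not_subset.mp fun h => hne (eq_of_subset_of_card_le h hcard.ge)
  obtain ⟨y, hy₂, hy₁⟩ := not_subset.mp fun h => hne (eq_of_subset_of_card_le h hcard.le).symm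
  have hx : x ∈ sigmaSeg F₁ := by
    by_contra h
    exact hx₂ (hG₂ (hR₁ (mem_sdiff.mpr ⟨hx₁, h⟩)))
  have hy : y ∈ sigmaSeg F₂ := by
    by_contra h
    exact hy₁ (hG₁ (hR₂ (mem_sdiff.mpr ⟨hy₂, h⟩)))
  rcases le_total x y with hxy | hyx
  · exact hy₁ (mem_sigmaSeg.mp hx y hxy)
  · exact hx₂ (mem_sigmaSeg.mp hy x hyx)

variable {Δ : Set (Finset (Fin n))} {a : ℕ}

lemma exists_isFacet_superset {G : Finset (Fin n)} (hG : G ∈ Δ) : ∃ F, IsFacet Δ F ∧ G ⊆ F := by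
  obtain ⟨F, hGF, hF⟩ := Δ.toFinite.exists_le_maximal hG
  exact ⟨F, ⟨hF.prop, fun H hH hFH => hFH.antisymm (hF.le_of_ge hH hFH)⟩, hGF⟩

lemma isFacet_of_card_eq (hpure : ∀ F, IsFacet Δ F → #F = a) {F : Finset (Fin n)}
    (hF : F ∈ Δ) (hcard : #F = a) : IsFacet Δ F := by
  refine ⟨hF, fun H hH hFH => eq_of_subset_of_card_le hFH ?_⟩
  obtain ⟨K, hK, hHK⟩ := exists_isFacet_superset hH
  exact hcard ▸ hpure K hK ▸ card_le_card hHK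

lemma exists_isFacet_sdiff_sigmaSeg_subset (hS : ShiftedCplx Δ)
    (hpure : ∀ F, IsFacet Δ F → #F = a) {G : Finset (Fin n)} (hG : G ∈ Δ) :
    ∃ F, IsFacet Δ F ∧ F \ sigmaSeg F ⊆ G ∧ G ⊆ F := by
  obtain ⟨F, ⟨hF, hGF⟩, hmax⟩ := Set.exists_max_image {F | IsFacet Δ F ∧ G ⊆ F}
    (fun F => ∑ x ∈ F, (x : ℕ)) (Set.toFinite _) (exists_isFacet_superset hG)
  refine ⟨F, hF, fun h hh => ?_, hGF⟩
  by_contra hhG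
  obtain ⟨hhF, hhσ⟩ := mem_sdiff.mp hh
  obtain ⟨l, hle, hlF⟩ : ∃ l, h ≤ l ∧ l ∉ F := by simpa using hhσ
  have hlt : h < l := lt_of_le_of_ne hle (by rintro rfl; exact hlF hhF)
  have hlF' : l ∉ F.erase h := fun hl => hlF (mem_of_mem_erase hl)
  have hF' : IsFacet Δ (insert l (F.erase h)) := by
    refine isFacet_of_card_eq hpure (hS F hF.1 h l hlt hhF hlF) ?_
    rw [card_insert_of_notMem hlF', card_erase_of_mem hhF, ← hpure F hF]
    exact Nat.sub_add_cancel (card_pos.mpr ⟨h, hhF⟩)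
  have hGF' : G ⊆ insert l (F.erase h) := fun x hx =>
    mem_insert_of_mem (mem_erase.mpr ⟨fun hxh => hhG (hxh ▸ hx), hGF hx⟩)
  have hsum := hmax _ ⟨hF', hGF'⟩
  rw [sum_insert hlF'] at hsum
  have hsplit := add_sum_erase F (fun x : Fin n => (x : ℕ)) hhF
  have hlt' : (h : ℕ) < l := hlt
  omega

lemma hPoly_eq_sum_X_pow_card_sdiff_sigmaSeg [DecidablePred (IsFacet Δ)] (hC : IsCplx Δ)
    (hS : ShiftedCplx Δ) (hpure : ∀ F, IsFacet Δ F → #F = a) :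
    hPoly a Δ = ∑ F with IsFacet Δ F, X ^ #(F \ sigmaSeg F) := by
  refine hPoly_eq_sum_X_pow_of_partition _ _ (fun F hF => hpure F (mem_filter.mp hF).2)
    (fun _ _ => sdiff_subset) (fun G => ⟨fun hG => ?_, fun ⟨F, hF, _, hGF⟩ => ?_⟩) ?_
  · obtain ⟨F, hF, hRG, hGF⟩ := exists_isFacet_sdiff_sigmaSeg_subset hS hpure hG
    exact ⟨F, by simpa using hF, hRG, hGF⟩
  · exact hC F (mem_filter.mp hF).2.1 G hGF
  · intro F₁ hF₁ F₂ hF₂ hne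
    simp only [coe_filter, mem_univ, true_and] at hF₁ hF₂
    refine disjoint_left.mpr fun G hG₁ hG₂ => hne ?_
    rw [mem_Icc] at hG₁ hG₂
    exact eq_of_sdiff_sigmaSeg_subset (by rw [hpure _ hF₁, hpure _ hF₂]) hG₁.1 hG₁.2 hG₂.1 hG₂.2

end Shifted

section LatticePath

variable {n : ℕ}

lemma xcoordS_eq_card_filter (F : Finset (Fin n)) (p : Fin n) :
    xcoordS F p = #{j ∈ Fᶜ | j < p} := by
  rw [xcoordS]
  congr 1
  ext j
  simp [and_comm]

lemma xcoordS_le_card_compl (F : Finset (Fin n)) (p : Fin n) : xcoordS F p ≤ #Fᶜ :=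
  xcoordS_eq_card_filter F p ▸ card_filter_le _ _

lemma xcoordS_eq_card_compl_iff (F : Finset (Fin n)) (p : Fin n) :
    xcoordS F p = #Fᶜ ↔ p ∈ sigmaSeg F := by
  rw [xcoordS_eq_card_filter, card_filter_eq_iff, mem_sigmaSeg]
  refine ⟨fun h l hpl => ?_, fun h j hj => ?_⟩
  · by_contra hl
    exact (h l (mem_compl.mpr hl)).not_ge hpl
  · by_contra hjp
    exact mem_compl.mp hj (h j (not_lt.mp hjp))

lemma degM_psiM {r a : ℕ} (F : Finset (Fin (r + a))) (hF : #F = a) :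
    degM (psiM r F) = #(F \ sigmaSeg F) := by
  have hr : #Fᶜ = r := by rw [card_compl, hF, Fintype.card_fin, Nat.add_sub_cancel]
  calc degM (psiM r F)
      = ∑ b ∈ range (r + a), if b < r then #{p ∈ F | xcoordS F p = b} else 0 :=
        Fin.sum_univ_eq_sum_range (fun b => if b < r then #{p ∈ F | xcoordS F p = b} else 0) _
    _ = ∑ b ∈ range r, #{p ∈ F | xcoordS F p = b} := by
        rw [← sum_filter]
        congr 1
        ext b
        simp only [mem_filter, mem_range]
        omega
    _ = #{p ∈ F | xcoordS F p ∈ range r} := sum_card_fiberwise_eq_card_filter _ _ _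
    _ = #(F \ sigmaSeg F) := by
        congr 1
        ext p
        rw [mem_filter, mem_sdiff, mem_range, ← xcoordS_eq_card_compl_iff, hr]
        have := hr ▸ xcoordS_le_card_compl F p
        exact and_congr_right fun _ => by omega

end LatticePath

theorem hvec_eq_fvec_psi_general (r a : ℕ) (Δ : Set (Finset (Fin (r + a))))
    (hC : IsCplx Δ) (hS : ShiftedCplx Δ)
    (hpure : ∀ F, IsFacet Δ F → F.card = a) :
    ∀ i ≤ a, hvec a Δ i =
      ({F : Finset (Fin (r + a)) | IsFacet Δ F ∧ degM (psiM r F) = i}.ncard : ℤ) := by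
  classical
  intro i _
  rw [hvec_eq_coeff_hPoly, hPoly_eq_sum_X_pow_card_sdiff_sigmaSeg hC hS hpure, finsetSum_coeff]
  simp_rw [coeff_X_pow]
  rw [sum_boole, filter_filter, ← Set.ncard_coe_finset]
  congr 2
  ext F
  simp only [coe_filter, mem_univ, true_and, Set.mem_ofPred_eq]
  exact and_congr_right fun hF => by rw [degM_psiM F (hpure F hF), eq_comm]

/-- (Proposition 3.3(b)) For a pure shifted `(a-1)`-complex `Δ` on `[n]`
(`n = r + a`), the `h`-vector of `Δ` is the `f`-vector of `Ψ(Δ) = {ψ(F) : F facet of Δ}`: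
`h_i(Δ)` equals the number of facets `F` with `deg ψ(F) = i`. -/
theorem hvec_eq_fvec_psi (r a : ℕ) (ha : 0 < a) (Δ : Set (Finset (Fin (r + a))))
    (hC : IsCplx Δ) (hS : ShiftedCplx Δ)
    (hpure : ∀ F, IsFacet Δ F → F.card = a) (hne : ∃ F ∈ Δ, F.card = a) :
    ∀ i ≤ a, hvec a Δ i =
      ({F : Finset (Fin (r + a)) | IsFacet Δ F ∧ degM (psiM r F) = i}.ncard : ℤ) :=
  hvec_eq_fvec_psi_general r a Δ hC hS hpure
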